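/- For every triple x = (x₁, x₂, x₃) ∈ ℂ³, the double outer Napoleon transformation is the convex combination N⁻(N⁻(x))ᵢ = (2/3)·xᵢ + (1/3)·T⁺(x)ᵢ for i = 1, 2, 3 of the original triple and its inner Torricelli configuration. -/

import Mathlib

open Complex

/-- Inner Torricelli transformation on triples of complex numbers. -/
noncomputable def Tplus (x : ℂ × ℂ × ℂ) : ℂ × ℂ × ℂ :=
  ((x.2.1 + x.2.2) / 2 + (Real.sqrt 3 / 2 : ℝ) * Complex.I * (x.2.2 - x.2.1),
   (x.2.2 + x.1) / 2 + (Real.sqrt 3 / 2 : ℝ) * Complex.I * (x.1 - x.2.2),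
   (x.1 + x.2.1) / 2 + (Real.sqrt 3 / 2 : ℝ) * Complex.I * (x.2.1 - x.1))

/-- Outer Torricelli transformation on triples of complex numbers. -/
noncomputable def Tminus (x : ℂ × ℂ × ℂ) : ℂ × ℂ × ℂ :=
  ((x.2.1 + x.2.2) / 2 + (Real.sqrt 3 / 2 : ℝ) * (-Complex.I) * (x.2.2 - x.2.1),
   (x.2.2 + x.1) / 2 + (Real.sqrt 3 / 2 : ℝ) * (-Complex.I) * (x.1 - x.2.2),
   (x.1 + x.2.1) / 2 + (Real.sqrt 3 / 2 : ℝ) * (-Complex.I) * (x.2.1 - x.1))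

/-- Inner Napoleon transformation. -/
noncomputable def Nplus (x : ℂ × ℂ × ℂ) : ℂ × ℂ × ℂ :=
  ((x.2.1 + x.2.2 + (Tplus x).1) / 3,
   (x.2.2 + x.1 + (Tplus x).2.1) / 3,
   (x.1 + x.2.1 + (Tplus x).2.2) / 3)

/-- Outer Napoleon transformation. -/
noncomputable def Nminus (x : ℂ × ℂ × ℂ) : ℂ × ℂ × ℂ :=
  ((x.2.1 + x.2.2 + (Tminus x).1) / 3,
   (x.2.2 + x.1 + (Tminus x).2.1) / 3,
   (x.1 + x.2.1 + (Tminus x).2.2) / 3)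

/-- Centroid of a triple. -/
noncomputable def centroid3 (x : ℂ × ℂ × ℂ) : ℂ := (x.1 + x.2.1 + x.2.2) / 3

/-!
Every map here is circulant: a polynomial `p + q S + r S²` in the cyclic shift `S` of a triple,
and composing circulants multiplies these polynomials modulo `S³ = 1`. With `ζ = e^{iπ/3}`, so
that `conj ζ = 1 - ζ` and `ζ (1 - ζ) = 1`, the inner Torricelli map is `(1 - ζ) S + ζ S²` and the
outer Napoleon map is `((1 + ζ) S + (2 - ζ) S²) / 3`. Squaring the latter and using
`ζ² = ζ - 1` gives `2/3 + ((1 - ζ) S + ζ S²) / 3`.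
-/

section Circulant

variable {R : Type*} [CommSemiring R]

def circulant3 (p q r : R) (x : R × R × R) : R × R × R :=
  (p * x.1 + q * x.2.1 + r * x.2.2,
   p * x.2.1 + q * x.2.2 + r * x.1,
   p * x.2.2 + q * x.1 + r * x.2.1)

theorem circulant3_circulant3 (p q r p' q' r' : R) (x : R × R × R) :
    circulant3 p q r (circulant3 p' q' r' x) =
      circulant3 (p * p' + q * r' + r * q') (p * q' + q * p' + r * r') (p * r' + q * q' + r * p')
        x := by
  simp only [circulant3, Prod.mk.injEq]
  refine ⟨by ring, by ring, by ring⟩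

end Circulant

theorem circulant3_outerNapoleon_sq {K : Type*} [Field K] [CharZero K] {ζ : K}
    (hζ : ζ * (1 - ζ) = 1) (x : K × K × K) :
    circulant3 0 ((1 + ζ) / 3) ((2 - ζ) / 3) (circulant3 0 ((1 + ζ) / 3) ((2 - ζ) / 3) x) =
      circulant3 (2 / 3) ((1 - ζ) / 3) (ζ / 3) x := by
  rw [circulant3_circulant3]
  congr 1
  · linear_combination (2 / 9 : K) * hζ
  · linear_combination (-1 / 9 : K) * hζ
  · linear_combination (-1 / 9 : K) * hζ

noncomputable def sixthRoot : ℂ := 1 / 2 + (Real.sqrt 3 / 2 : ℝ) * I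

theorem sixthRoot_mul_one_sub : sixthRoot * (1 - sixthRoot) = 1 := by
  have h3 : ((Real.sqrt 3 : ℝ) : ℂ) ^ 2 = 3 := by
    rw [← ofReal_pow, Real.sq_sqrt (by norm_num : (0 : ℝ) ≤ 3)]
    norm_num
  simp only [sixthRoot, ofReal_div, ofReal_ofNat]
  linear_combination (-I ^ 2 / 4) * h3 - (3 / 4 : ℂ) * I_sq

theorem Tplus_eq_circulant3 (x : ℂ × ℂ × ℂ) :
    Tplus x = circulant3 0 (1 - sixthRoot) sixthRoot x := by
  simp only [Tplus, circulant3, sixthRoot, Prod.mk.injEq]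
  refine ⟨by ring, by ring, by ring⟩

theorem Tminus_eq_circulant3 (x : ℂ × ℂ × ℂ) :
    Tminus x = circulant3 0 sixthRoot (1 - sixthRoot) x := by
  simp only [Tminus, circulant3, sixthRoot, Prod.mk.injEq]
  refine ⟨by ring, by ring, by ring⟩

theorem Nminus_eq_circulant3 (x : ℂ × ℂ × ℂ) :
    Nminus x = circulant3 0 ((1 + sixthRoot) / 3) ((2 - sixthRoot) / 3) x := by
  simp only [Nminus, Tminus_eq_circulant3, circulant3, Prod.mk.injEq]
  refine ⟨by ring, by ring, by ring⟩

theorem double_outer_napoleon_formula (x : ℂ × ℂ × ℂ) :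
    (Nminus (Nminus x)).1 = (2 / 3 : ℂ) * x.1 + (1 / 3 : ℂ) * (Tplus x).1 ∧
    (Nminus (Nminus x)).2.1 = (2 / 3 : ℂ) * x.2.1 + (1 / 3 : ℂ) * (Tplus x).2.1 ∧
    (Nminus (Nminus x)).2.2 = (2 / 3 : ℂ) * x.2.2 + (1 / 3 : ℂ) * (Tplus x).2.2 := by
  rw [Nminus_eq_circulant3, Nminus_eq_circulant3,
    circulant3_outerNapoleon_sq sixthRoot_mul_one_sub, Tplus_eq_circulant3]
  simp only [circulant3]
  refine ⟨by ring, by ring, by ring⟩
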